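/- Let T : h → g be a nonabelian embedding tensor on a Lie algebra g with respect to a coherent action (h;ρ). Then the bilinear bracket [u,v]_T := ρ(Tu)v + [u,v]_h satisfies the left Leibniz identity [u,[v,w]_T]_T = [[u,v]_T,w]_T + [v,[u,w]_T]_T for all u,v,w ∈ h (so (h,[-,-]_T) is a Leibniz algebra, the descendent Leibniz algebra of T), and moreover T([u,v]_T) = [Tu,Tv]_g for all u,v ∈ h. -/
import Mathlib


variable {k : Type*} [Field k]
variable {g : Type*} [LieRing g] [LieAlgebra k g]
variable {h : Type*} [LieRing h] [LieAlgebra k h]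

/-- The descendent bracket `[u,v]_T = ρ(Tu)v + [u,v]_h` on `h` induced by a linear map
`T : h → g` and an action `ρ`. -/
def descBracket (ρ : g →ₗ[k] h →ₗ[k] h) (T : h →ₗ[k] g) (u v : h) : h :=
  ρ (T u) v + ⁅u, v⁆

/-- if `T` is a nonabelian embedding tensor on `g` with respect to a coherent
action `(h;ρ)`, then `[u,v]_T = ρ(Tu)v + [u,v]_h` satisfies the left Leibniz identity
(so `(h,[-,-]_T)` is a Leibniz algebra, the descendent Leibniz algebra), and
`T([u,v]_T) = [Tu,Tv]_g`. -/
theorem descBracket_leibniz_and_hom (ρ : g →ₗ[k] h →ₗ[k] h)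
    (hρ_der : ∀ (x : g) (u v : h), ρ x ⁅u, v⁆ = ⁅ρ x u, v⁆ + ⁅u, ρ x v⁆)
    (hρ_hom : ∀ (x y : g) (u : h), ρ ⁅x, y⁆ u = ρ x (ρ y u) - ρ y (ρ x u))
    (hρ_coh : ∀ (x : g) (u v : h), ⁅ρ x u, v⁆ = (0 : h))
    (T : h →ₗ[k] g)
    (hT : ∀ u v : h, ⁅T u, T v⁆ = T (ρ (T u) v + ⁅u, v⁆)) :
    (∀ u v w : h,
      descBracket ρ T u (descBracket ρ T v w) =
        descBracket ρ T (descBracket ρ T u v) w + descBracket ρ T v (descBracket ρ T u w)) ∧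
    (∀ u v : h, T (descBracket ρ T u v) = ⁅T u, T v⁆) := by
  have hcoh' : ∀ (x : g) (u v : h), ⁅u, ρ x v⁆ = (0 : h) := by
    intro x u v
    rw [← neg_neg (⁅u, ρ x v⁆), ← lie_skew, hρ_coh]; simp
  constructor
  · intro u v w
    simp only [descBracket]
    rw [← hT u v, hρ_hom]
    simp only [map_add, lie_add, add_lie]
    simp only [hρ_der, hρ_coh, hcoh', leibniz_lie u v w]
    abel
  · intro u v
    exact (hT u v).symm
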